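/- There exists a rooted digraph D with no subgraph-maximal vertex-flame: explicitly, let D have root r and disjoint vertex sets V₀, V₁, V₂ with V₀, V₂ countably infinite and V₁ uncountable, with all edges rv for v ∈ V₀, all edges from V₀ to V₁, and all edges from V₁ to V₂. Then the set of vertex-flames contained in D, ordered by the subgraph relation, has no maximal element. -/

import Mathlib

/-!  Common framework: digraphs as edge sets on a vertex type, directed paths,
path-systems, separations, flames and largeness. -/

universe u

variable {V : Type u}

/-- A directed path in the digraph on `V` with edge set `E`, given by its
(nonempty, repetition-free) list of vertices `start :: rest`. -/
structure Dipath (E : Set (V × V)) : Type u where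
  start : V
  rest : List V
  chain : List.Chain (fun a b => (a, b) ∈ E) start rest
  nodup : (start :: rest).Nodup

namespace Dipath

variable {E : Set (V × V)}

/-- The list of vertices of the path. -/
def verts (p : Dipath E) : List V := p.start :: p.rest

/-- The terminal vertex of the path. -/
def last (p : Dipath E) : V := (p.start :: p.rest).getLast (List.cons_ne_nil _ _)

/-- The set of vertices of the path. -/
def support (p : Dipath E) : Set V := {v | v ∈ p.verts}

/-- The internal vertices of the path (all vertices except the first and the last). -/
def internal (p : Dipath E) : Set V := {v | v ∈ p.rest.dropLast}

/-- The list of (directed) edges of the path. -/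
def edges (p : Dipath E) : List (V × V) := p.verts.zip p.rest

/-- The set of edges of the path. -/
def edgeSet (p : Dipath E) : Set (V × V) := {e | e ∈ p.edges}

/-- The last edge of the path, if the path has at least one edge. -/
def lastEdge? (p : Dipath E) : Option (V × V) := p.edges.getLast?

end Dipath

section Defs

variable (E : Set (V × V))

/-- The set of ingoing edges of `v`. -/
def inEdges (v : V) : Set (V × V) := {e ∈ E | e.2 = v}

/-- The set of initial vertices of a set of paths. -/
def initVerts {E : Set (V × V)} (P : Set (Dipath E)) : Set V := Dipath.start '' P

/-- The set of terminal vertices of a set of paths. -/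
def termVerts {E : Set (V × V)} (P : Set (Dipath E)) : Set V := Dipath.last '' P

/-- The set of terminal edges of a set of paths. -/
def termEdges {E : Set (V × V)} (P : Set (Dipath E)) : Set (V × V) :=
  {e | ∃ p ∈ P, p.lastEdge? = some e}

/-- An `(r,v)`-path-system: a set of pairwise internally disjoint directed
paths from `r` to `v`. -/
def IsRVSystem (r v : V) (P : Set (Dipath E)) : Prop :=
  (∀ p ∈ P, p.start = r ∧ p.last = v) ∧
    P.Pairwise fun p q => p.support ∩ q.support ⊆ {r, v}

/-- An `(r,v)`-separation: a set of vertices avoiding `r` and `v` and meeting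
every directed path from `r` to `v`. -/
def IsSeparation (r v : V) (S : Set V) : Prop :=
  r ∉ S ∧ v ∉ S ∧ ∀ p : Dipath E, p.start = r → p.last = v → (p.support ∩ S).Nonempty

/-- A set of paths `P` and a vertex set `S` are orthogonal:  every path of `P`
meets `S` in exactly one vertex and every vertex of `S` lies on a path of `P`. -/
def Orthogonal {E : Set (V × V)} (P : Set (Dipath E)) (S : Set V) : Prop :=
  (∀ p ∈ P, ∃! x, x ∈ p.support ∩ S) ∧ ∀ x ∈ S, ∃ p ∈ P, x ∈ p.support

/-- An Erdős–Menger `(r,v)`-path-system: one orthogonal to some `(r,v)`-separation. -/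
def IsEMSystem (r v : V) (P : Set (Dipath E)) : Prop :=
  IsRVSystem E r v P ∧ ∃ S, IsSeparation E r v S ∧ Orthogonal P S

/-- An Erdős–Menger `(r,v)`-separation: one orthogonal to some `(r,v)`-path-system. -/
def IsEMSeparation (r v : V) (S : Set V) : Prop :=
  IsSeparation E r v S ∧ ∃ P : Set (Dipath E), IsRVSystem E r v P ∧ Orthogonal P S

/-- `𝒢_E(v)` (with root `r`): the collection of edge sets `I` that arise as the set of
terminal edges of an internally disjoint `(r,v)`-path-system in `E`. -/
def GSet (r v : V) : Set (Set (V × V)) :=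
  {I | ∃ P : Set (Dipath E), IsRVSystem E r v P ∧ termEdges P = I}

/-- A vertex-flame (with root `r`): for every `v ≠ r`, the whole in-edge set of `v`
is the terminal edge set of an internally disjoint `(r,v)`-path-system. -/
def IsFlame (r : V) : Prop := ∀ v, v ≠ r → inEdges E v ∈ GSet E r v

/-- `L` is `v`-large with respect to the digraph `E` rooted at `r`: `L` contains `rv`
whenever `E` does, and some Erdős–Menger `(r,v)`-path-system of `E - rv` lies in `L`. -/
def VLarge (r : V) (L : Set (V × V)) (v : V) : Prop :=
  ((r, v) ∈ E → (r, v) ∈ L) ∧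
    ∃ P : Set (Dipath (E \ {(r, v)})),
      IsEMSystem (E \ {(r, v)}) r v P ∧ ∀ p ∈ P, p.edgeSet ⊆ L

/-- `L` is large with respect to the digraph `E` rooted at `r`. -/
def Large (r : V) (L : Set (V × V)) : Prop := ∀ v, v ≠ r → VLarge E r L v

/-- An `(X,Y)`-path: from `X` to `Y`, internally disjoint from `X ∪ Y`. -/
def IsXYPath (X Y : Set V) (p : Dipath E) : Prop :=
  p.start ∈ X ∧ p.last ∈ Y ∧ ∀ w ∈ p.internal, w ∉ X ∪ Y

/-- An `(X,Y)`-path-system: pairwise disjoint `(X,Y)`-paths. -/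
def IsXYSystem (X Y : Set V) (P : Set (Dipath E)) : Prop :=
  (∀ p ∈ P, IsXYPath E X Y p) ∧ P.Pairwise fun p q => Disjoint p.support q.support

/-- `X` is joinable to `Y`: some `(X,Y)`-path-system covers `X` with its initial vertices. -/
def Joinable (X Y : Set V) : Prop :=
  ∃ P : Set (Dipath E), IsXYSystem E X Y P ∧ initVerts P = X

/-- `X` is incompressible to `Y`: `X` is joinable to `Y` and every witnessing
path-system covers `Y` with its terminal vertices. -/
def Incompressible (X Y : Set V) : Prop :=
  Joinable E X Y ∧
    ∀ P : Set (Dipath E), IsXYSystem E X Y P → initVerts P = X → termVerts P = Y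

/-- An `(X,Y)`-separation: a vertex set meeting every `(X,Y)`-path. -/
def IsXYSeparation (X Y : Set V) (S : Set V) : Prop :=
  ∀ p : Dipath E, IsXYPath E X Y p → (p.support ∩ S).Nonempty

/-- An Erdős–Menger `(X,Y)`-separation: one orthogonal to some `(X,Y)`-path-system. -/
def IsEMXYSeparation (X Y : Set V) (S : Set V) : Prop :=
  IsXYSeparation E X Y S ∧ ∃ P : Set (Dipath E), IsXYSystem E X Y P ∧ Orthogonal P S

/-- `X'` is `(X,Y)`-finitely extendable: every `O` with `X' ⊆ O ⊆ X` and `O \ X'`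
finite is joinable to `Y`. -/
def FinExtendable (X Y X' : Set V) : Prop :=
  X' ⊆ X ∧ ∀ O, X' ⊆ O → O ⊆ X → (O \ X').Finite → Joinable E O Y

/-- `S` separates the vertex `y` from `r`:  every directed path from `r` to `y` meets `S`. -/
def SeparatesFrom (r : V) (S : Set V) (y : V) : Prop :=
  ∀ p : Dipath E, p.start = r → p.last = y → (p.support ∩ S).Nonempty

/-- An `(X,y)`-path: from a vertex of `X` to `y`, internally disjoint from `X`. -/
def IsXyPath (X : Set V) (y : V) (p : Dipath E) : Prop :=
  p.start ∈ X ∧ p.last = y ∧ ∀ w ∈ p.internal, w ∉ X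

/-- An `(X,y)`-path-system: `(X,y)`-paths, pairwise disjoint except possibly at `y`. -/
def IsXySystem (X : Set V) (y : V) (P : Set (Dipath E)) : Prop :=
  (∀ p ∈ P, IsXyPath E X y p) ∧ P.Pairwise fun p q => p.support ∩ q.support ⊆ {y}

/-- An `(r,S)`-path: from `r` to a vertex of `S`, internally disjoint from `S`. -/
def IsRSPath (r : V) (S : Set V) (p : Dipath E) : Prop :=
  p.start = r ∧ p.last ∈ S ∧ ∀ w ∈ p.internal, w ∉ S

/-- An `(r,S)`-path-system: `(r,S)`-paths, pairwise disjoint apart from `r`. -/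
def IsRSSystem (r : V) (S : Set V) (P : Set (Dipath E)) : Prop :=
  (∀ p ∈ P, IsRSPath E r S p) ∧ P.Pairwise fun p q => p.support ∩ q.support ⊆ {r}

/-- `E` is a `G`-quasi-flame (with root `r`): for every `v ≠ r`, every set `I` of
ingoing edges of `v` with `I \ inEdges G v` finite lies in `𝒢_E(v)`. -/
def QuasiFlame (r : V) (G : Set (V × V)) : Prop :=
  ∀ v, v ≠ r → ∀ I, I ⊆ inEdges E v → (I \ inEdges G v).Finite → I ∈ GSet E r v

/-- The local connectivity `κ_E(r,v)`: the maximum size of an internally disjoint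
`(r,v)`-path-system. -/
noncomputable def kappa (r v : V) : ℕ :=
  sSup {n | ∃ P : Set (Dipath E), IsRVSystem E r v P ∧ P.Finite ∧ P.ncard = n}

end Defs

/-- The vertex type of the counterexample digraph: a root, a countably infinite
level `V₀ = ℕ`, an uncountable level `V₁ = (ℕ → Bool)`, and a countably infinite
level `V₂ = ℕ`. -/
abbrev VEx : Type := Option (ℕ ⊕ ((ℕ → Bool) ⊕ ℕ))

/-- The edge set of the counterexample: all edges from the root to `V₀`, all edges
from `V₀` to `V₁`, and all edges from `V₁` to `V₂`. -/
def EEx : Set (VEx × VEx) :=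
  {e | (∃ n : ℕ, e = (none, some (Sum.inl n))) ∨
       (∃ (n : ℕ) (f : ℕ → Bool), e = (some (Sum.inl n), some (Sum.inr (Sum.inl f)))) ∨
       (∃ (f : ℕ → Bool) (m : ℕ), e = (some (Sum.inr (Sum.inl f)), some (Sum.inr (Sum.inr m))))}

/-!
Adding an edge `xy` to a flame keeps it a flame as soon as the new in-edge set of `y` is realised
by internally disjoint paths, since nothing changes at the other vertices. A missing edge `r v₀`
realises itself, and once all of these are present, a missing edge `v₀ v₁` is added with the
paths `r v₀' v₁`, one for each in-neighbour `v₀'` of `v₁`. If all edges into `V₀ ∪ V₁` are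
present, any countable set of edges into `v₂ ∈ V₂` is realised by paths `r v₀ v₁ v₂` through
distinct vertices `v₀`. In a flame the in-edges at `v₂` are countable, because the paths realising
them pass through distinct vertices of the countable set `V₀`; as `V₁` is uncountable, some edge
`v₁ v₂` can still be added.
-/

section General

variable {V : Type u} {E E' : Set (V × V)} {r v : V}

def Dipath.mapLe (h : E ⊆ E') (p : Dipath E) : Dipath E' :=
  ⟨p.start, p.rest, List.IsChain.imp (fun _ _ hab => h hab) p.chain, p.nodup⟩

theorem GSet_mono (h : E ⊆ E') : GSet E r v ⊆ GSet E' r v := by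
  rintro I ⟨P, ⟨hends, hdisj⟩, rfl⟩
  refine ⟨Dipath.mapLe h '' P, ⟨?_, ?_⟩, ?_⟩
  · rintro _ ⟨p, hp, rfl⟩
    exact hends p hp
  · rintro _ ⟨p, hp, rfl⟩ _ ⟨q, hq, rfl⟩ hne
    exact hdisj hp hq fun hpq => hne (hpq ▸ rfl)
  · ext e
    exact ⟨fun ⟨_, ⟨p, hp, hpe⟩, he⟩ => ⟨p, hp, by subst hpe; exact he⟩,
      fun ⟨p, hp, he⟩ => ⟨_, ⟨p, hp, rfl⟩, he⟩⟩

theorem mem_GSet_of_pairwise {ι : Type*} {I : Set (V × V)} (p : ι → Dipath E)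
    (hends : ∀ i, (p i).start = r ∧ (p i).last = v)
    (hdisj : Pairwise fun i j => (p i).support ∩ (p j).support ⊆ {r, v})
    (hterm : ∀ e, e ∈ I ↔ ∃ i, (p i).lastEdge? = some e) : I ∈ GSet E r v := by
  refine ⟨Set.range p, ⟨?_, ?_⟩, ?_⟩
  · rintro _ ⟨i, rfl⟩
    exact hends i
  · rintro _ ⟨i, rfl⟩ _ ⟨j, rfl⟩ hne
    exact hdisj fun hij => hne (hij ▸ rfl)
  · ext e
    simp only [termEdges, Set.exists_range_iff, hterm, Set.mem_ofPred_eq]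

theorem inEdges_insert_of_ne {e : V × V} (h : e.2 ≠ v) :
    inEdges (insert e E) v = inEdges E v := by
  ext x
  simp only [inEdges, Set.mem_ofPred_eq, Set.mem_insert_iff]
  exact ⟨fun ⟨hx, hxv⟩ => ⟨hx.resolve_left (by rintro rfl; exact h hxv), hxv⟩,
    fun ⟨hx, hxv⟩ => ⟨Or.inr hx, hxv⟩⟩

theorem inEdges_insert_self (e : V × V) :
    inEdges (insert e E) e.2 = insert e (inEdges E e.2) := by
  ext x
  simp only [inEdges, Set.mem_ofPred_eq, Set.mem_insert_iff]
  constructor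
  · rintro ⟨rfl | hx, hx2⟩
    exacts [Or.inl rfl, Or.inr ⟨hx, hx2⟩]
  · rintro (rfl | ⟨hx, hx2⟩)
    exacts [⟨Or.inl rfl, rfl⟩, ⟨Or.inr hx, hx2⟩]

theorem IsFlame.insert (hE : IsFlame E r) {e : V × V}
    (he : inEdges (insert e E) e.2 ∈ GSet (insert e E) r e.2) : IsFlame (insert e E) r := by
  intro v hv
  by_cases hve : v = e.2
  · exact hve ▸ he
  · rw [inEdges_insert_of_ne (Ne.symm hve)]
    exact GSet_mono (Set.subset_insert e E) (hE v hv)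

theorem IsRVSystem.countable_termEdges {P : Set (Dipath E)} (hP : IsRVSystem E r v P)
    {C : Set V} (hC : C.Countable) (hr : r ∉ C) (hv : v ∉ C)
    (hmeet : ∀ p ∈ P, (p.support ∩ C).Nonempty) : (termEdges P).Countable := by
  have : Nonempty V := ⟨r⟩
  choose! c hc using hmeet
  have hinj : Set.InjOn c P := by
    intro p hp q hq hpq
    by_contra hne
    rcases hP.2 hp hq hne ⟨(hc p hp).1, hpq ▸ (hc q hq).1⟩ with h | h
    exacts [hr (h ▸ (hc p hp).2), hv (h ▸ (hc p hp).2)]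
  have hPc : P.Countable := Set.MapsTo.countable_of_injOn (fun p hp => (hc p hp).2) hinj hC
  exact (hPc.image Dipath.lastEdge?).preimage (Option.some_injective _)

end General

abbrev w0 (n : ℕ) : VEx := some (Sum.inl n)
abbrev w1 (g : ℕ → Bool) : VEx := some (Sum.inr (Sum.inl g))
abbrev w2 (m : ℕ) : VEx := some (Sum.inr (Sum.inr m))

theorem uncountable_nat_bool : Uncountable (ℕ → Bool) := by
  rw [← Cardinal.aleph0_lt_mk_iff, ← Cardinal.power_def, Cardinal.mk_fintype, Fintype.card_bool,
    Cardinal.mk_nat]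
  exact_mod_cast Cardinal.cantor _

namespace EEx

theorem root_mem (n : ℕ) : ((none : VEx), w0 n) ∈ EEx := Or.inl ⟨n, rfl⟩
theorem w0_w1_mem (n : ℕ) (g : ℕ → Bool) : (w0 n, w1 g) ∈ EEx := Or.inr (Or.inl ⟨n, g, rfl⟩)
theorem w1_w2_mem (g : ℕ → Bool) (m : ℕ) : (w1 g, w2 m) ∈ EEx := Or.inr (Or.inr ⟨g, m, rfl⟩)

variable {x y : VEx}

theorem eq_w0_of_mem_none (h : (none, y) ∈ EEx) : ∃ n, y = w0 n := by
  rcases h with ⟨_, he⟩ | ⟨_, _, he⟩ | ⟨_, _, he⟩ <;> simp_all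

theorem eq_none_of_mem_w0 {n : ℕ} (h : (x, w0 n) ∈ EEx) : x = none := by
  rcases h with ⟨_, he⟩ | ⟨_, _, he⟩ | ⟨_, _, he⟩ <;> simp_all

theorem eq_w0_of_mem_w1 {g : ℕ → Bool} (h : (x, w1 g) ∈ EEx) : ∃ n, x = w0 n := by
  rcases h with ⟨_, he⟩ | ⟨_, _, he⟩ | ⟨_, _, he⟩ <;> simp_all

theorem eq_w1_of_mem_w2 {m : ℕ} (h : (x, w2 m) ∈ EEx) : ∃ g, x = w1 g := by
  rcases h with ⟨_, he⟩ | ⟨_, _, he⟩ | ⟨_, _, he⟩ <;> simp_all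

end EEx

section Paths

variable {E : Set (VEx × VEx)}

def path1 (n : ℕ) (h : ((none : VEx), w0 n) ∈ E) : Dipath E :=
  ⟨none, [w0 n], .cons_cons h (.singleton _), by simp⟩

def path2 (n : ℕ) (g : ℕ → Bool) (h₁ : ((none : VEx), w0 n) ∈ E) (h₂ : (w0 n, w1 g) ∈ E) :
    Dipath E :=
  ⟨none, [w0 n, w1 g], .cons_cons h₁ (.cons_cons h₂ (.singleton _)), by simp⟩

def path3 (n : ℕ) (g : ℕ → Bool) (m : ℕ) (h₁ : ((none : VEx), w0 n) ∈ E)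
    (h₂ : (w0 n, w1 g) ∈ E) (h₃ : (w1 g, w2 m) ∈ E) : Dipath E :=
  ⟨none, [w0 n, w1 g, w2 m], .cons_cons h₁ (.cons_cons h₂ (.cons_cons h₃ (.singleton _))), by simp⟩

@[simp] theorem lastEdge?_path1 (n : ℕ) (h : ((none : VEx), w0 n) ∈ E) :
    (path1 n h).lastEdge? = some (none, w0 n) := rfl

@[simp] theorem lastEdge?_path2 (n : ℕ) (g : ℕ → Bool) (h₁ : ((none : VEx), w0 n) ∈ E)
    (h₂ : (w0 n, w1 g) ∈ E) : (path2 n g h₁ h₂).lastEdge? = some (w0 n, w1 g) := rfl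

@[simp] theorem lastEdge?_path3 (n : ℕ) (g : ℕ → Bool) (m : ℕ) (h₁ : ((none : VEx), w0 n) ∈ E)
    (h₂ : (w0 n, w1 g) ∈ E) (h₃ : (w1 g, w2 m) ∈ E) :
    (path3 n g m h₁ h₂ h₃).lastEdge? = some (w1 g, w2 m) := rfl

@[simp] theorem support_path2 (n : ℕ) (g : ℕ → Bool) (h₁ : ((none : VEx), w0 n) ∈ E)
    (h₂ : (w0 n, w1 g) ∈ E) : (path2 n g h₁ h₂).support = {none, w0 n, w1 g} := by
  ext; simp [path2, Dipath.support, Dipath.verts]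

@[simp] theorem support_path3 (n : ℕ) (g : ℕ → Bool) (m : ℕ) (h₁ : ((none : VEx), w0 n) ∈ E)
    (h₂ : (w0 n, w1 g) ∈ E) (h₃ : (w1 g, w2 m) ∈ E) :
    (path3 n g m h₁ h₂ h₃).support = {none, w0 n, w1 g, w2 m} := by
  ext; simp [path3, Dipath.support, Dipath.verts]

theorem Dipath.exists_w0_mem_support (hE : E ⊆ EEx) (p : Dipath E) (hs : p.start = none)
    (hl : p.last ≠ none) : ∃ n, w0 n ∈ p.support := by
  cases p with | mk s l hchain _ =>
  change s = none at hs
  subst hs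
  cases l with
  | nil => exact absurd rfl hl
  | cons a l =>
    obtain ⟨n, rfl⟩ := EEx.eq_w0_of_mem_none (hE (List.isChain_cons_cons.1 hchain).1)
    exact ⟨n, by simp [Dipath.support, Dipath.verts]⟩

end Paths

section Levels

variable {E : Set (VEx × VEx)}

theorem inEdges_w0_mem_GSet (hE : E ⊆ EEx) (n : ℕ) : inEdges E (w0 n) ∈ GSet E none (w0 n) := by
  have hroot : ∀ e ∈ inEdges E (w0 n), e = (none, w0 n) := by
    rintro ⟨x, _⟩ ⟨hx, rfl⟩
    rw [EEx.eq_none_of_mem_w0 (hE hx)]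
  refine mem_GSet_of_pairwise (fun e : inEdges E (w0 n) => path1 n (hroot e e.2 ▸ e.2.1))
    (fun _ => ⟨rfl, rfl⟩) ?_ fun e => ?_
  · intro e e' hne
    exact absurd (Subtype.ext ((hroot e e.2).trans (hroot e' e'.2).symm)) hne
  simp only [lastEdge?_path1, Option.some.injEq]
  constructor
  · exact fun he => ⟨⟨e, he⟩, (hroot e he).symm⟩
  · rintro ⟨i, rfl⟩
    exact hroot i i.2 ▸ i.2

theorem inEdges_w1_mem_GSet (hE : E ⊆ EEx) (hroot : ∀ n, ((none : VEx), w0 n) ∈ E)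
    (g : ℕ → Bool) : inEdges E (w1 g) ∈ GSet E none (w1 g) := by
  refine mem_GSet_of_pairwise
    (fun n : {n // (w0 n, w1 g) ∈ E} => path2 n g (hroot n) n.2) (fun _ => ⟨rfl, rfl⟩) ?_ ?_
  · intro n n' hne x
    have : (n : ℕ) ≠ n' := fun h => hne (Subtype.ext h)
    simp only [support_path2]
    aesop
  · rintro ⟨x, y⟩
    simp only [lastEdge?_path2, Option.some.injEq]
    constructor
    · rintro ⟨he, rfl : y = w1 g⟩
      obtain ⟨n, rfl⟩ := EEx.eq_w0_of_mem_w1 (hE he)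
      exact ⟨⟨n, he⟩, rfl⟩
    · rintro ⟨n, h⟩
      exact h ▸ ⟨n.2, rfl⟩

theorem countable_w1_of_countable_inEdges {m : ℕ} (h : (inEdges E (w2 m)).Countable) :
    {g | (w1 g, w2 m) ∈ E}.Countable :=
  (h.preimage (f := fun g => (w1 g, w2 m)) fun g g' hg => by simpa using hg).mono
    fun g hg => show (w1 g, w2 m) ∈ inEdges E (w2 m) from ⟨hg, rfl⟩

theorem inEdges_w2_mem_GSet (hE : E ⊆ EEx) (hroot : ∀ n, ((none : VEx), w0 n) ∈ E)
    (hmid : ∀ n g, (w0 n, w1 g) ∈ E) {m : ℕ} (hcount : (inEdges E (w2 m)).Countable) :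
    inEdges E (w2 m) ∈ GSet E none (w2 m) := by
  obtain ⟨ι, hι⟩ := Set.countable_iff_exists_injective.1 (countable_w1_of_countable_inEdges hcount)
  refine mem_GSet_of_pairwise
    (fun g : {g // (w1 g, w2 m) ∈ E} => path3 (ι g) g m (hroot _) (hmid _ _) g.2)
    (fun _ => ⟨rfl, rfl⟩) ?_ ?_
  · intro g g' hne x
    have h1 : ι g ≠ ι g' := hι.ne hne
    have h2 : (g : ℕ → Bool) ≠ g' := fun h => hne (Subtype.ext h)
    simp only [support_path3]
    aesop
  · rintro ⟨x, y⟩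
    simp only [lastEdge?_path3, Option.some.injEq]
    constructor
    · rintro ⟨he, rfl : y = w2 m⟩
      obtain ⟨g, rfl⟩ := EEx.eq_w1_of_mem_w2 (hE he)
      exact ⟨⟨g, he⟩, rfl⟩
    · rintro ⟨g, h⟩
      exact h ▸ ⟨g.2, rfl⟩

theorem IsFlame.countable_inEdges_w2 {F : Set (VEx × VEx)} (hF : F ⊆ EEx)
    (hflame : IsFlame F none) (m : ℕ) : (inEdges F (w2 m)).Countable := by
  obtain ⟨P, hP, hPterm⟩ := hflame (w2 m) (by simp)
  rw [← hPterm]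
  refine hP.countable_termEdges (Set.countable_range w0) (by simp) (by simp) fun p hp => ?_
  obtain ⟨n, hn⟩ := Dipath.exists_w0_mem_support hF p (hP.1 p hp).1 (by simp [(hP.1 p hp).2])
  exact ⟨w0 n, hn, n, rfl⟩

theorem IsFlame.exists_w1_w2_notMem {F : Set (VEx × VEx)} (hF : F ⊆ EEx)
    (hflame : IsFlame F none) (m : ℕ) : ∃ f, (w1 f, w2 m) ∉ F := by
  have hcount := countable_w1_of_countable_inEdges (hflame.countable_inEdges_w2 hF m)
  have : Uncountable (ℕ → Bool) := uncountable_nat_bool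
  by_contra! hall
  have huniv : {g | (w1 g, w2 m) ∈ F} = Set.univ := Set.eq_univ_of_forall hall
  exact not_countable (Set.countable_univ_iff.1 (huniv ▸ hcount))

end Levels

/-- The explicit rooted digraph `EEx` has no subgraph-maximal vertex-flame: every
vertex-flame contained in it can be properly extended to another vertex-flame. -/
theorem stmt19 :
    ∀ F ⊆ EEx, IsFlame F (none : VEx) →
      ∃ F' : Set (VEx × VEx), F' ⊆ EEx ∧ IsFlame F' (none : VEx) ∧ F ⊂ F' := by
  intro F hF hflame
  by_cases hroot : ∃ n, ((none : VEx), w0 n) ∉ F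
  · obtain ⟨n, hn⟩ := hroot
    have hsub := Set.insert_subset (EEx.root_mem n) hF
    exact ⟨_, hsub, hflame.insert (inEdges_w0_mem_GSet hsub n), Set.ssubset_insert hn⟩
  push Not at hroot
  by_cases hmid : ∃ n g, (w0 n, w1 g) ∉ F
  · obtain ⟨n, g, hng⟩ := hmid
    have hsub := Set.insert_subset (EEx.w0_w1_mem n g) hF
    exact ⟨_, hsub, hflame.insert (inEdges_w1_mem_GSet hsub
      (fun n => Set.mem_insert_of_mem _ (hroot n)) g), Set.ssubset_insert hng⟩
  push Not at hmid
  obtain ⟨f, hf⟩ := hflame.exists_w1_w2_notMem hF 0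
  have hsub := Set.insert_subset (EEx.w1_w2_mem f 0) hF
  have hcount : (inEdges (insert (w1 f, w2 0) F) (w2 0)).Countable := by
    rw [inEdges_insert_self (w1 f, w2 0)]
    exact (hflame.countable_inEdges_w2 hF 0).insert _
  exact ⟨_, hsub, hflame.insert (inEdges_w2_mem_GSet hsub
    (fun n => Set.mem_insert_of_mem _ (hroot n)) (fun n g => Set.mem_insert_of_mem _ (hmid n g))
    hcount), Set.ssubset_insert hf⟩
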